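/- Let p, q be distinct words of equal positive length, r = pq, s = pp, n = |r|, u = r s^{n−1}, and v = sⁿ. Then the word uv = r s^{2n−1} is primitive. -/
import Mathlib


/-- `wpow w n` is the word `w` concatenated `n` times (the `n`-th power of `w`). -/
def wpow {α : Type*} (w : List α) (n : ℕ) : List α :=
  (List.replicate n w).flatten

/-- A word `w ∈ Σ⁺` is primitive if it is nonempty and not a proper power `r^k`, `k ≥ 2`. -/
def Primitive {α : Type*} (w : List α) : Prop :=
  w ≠ [] ∧ ∀ (r : List α) (k : ℕ), 2 ≤ k → w ≠ wpow r k

lemma wpow_zero {α : Type*} (w : List α) : wpow w 0 = [] := rfl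

lemma wpow_succ {α : Type*} (w : List α) (n : ℕ) :
    wpow w (n + 1) = w ++ wpow w n := by
  simp [wpow, List.replicate_succ]

lemma wpow_length {α : Type*} (w : List α) (n : ℕ) :
    (wpow w n).length = n * w.length := by
  induction n with
  | zero => simp [wpow_zero]
  | succ n ih => rw [wpow_succ, List.length_append, ih, Nat.succ_mul]; ring

lemma wpow_add {α : Type*} (w : List α) (a b : ℕ) :
    wpow w (a + b) = wpow w a ++ wpow w b := by
  induction a with
  | zero => simp [wpow_zero]
  | succ a ih =>
    rw [Nat.succ_add, wpow_succ, wpow_succ, ih, List.append_assoc]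

lemma wpow_two {α : Type*} (w : List α) : wpow w 2 = w ++ w := by
  rw [show (2 : ℕ) = 1 + 1 from rfl, wpow_succ, wpow_succ, wpow_zero, List.append_nil]

lemma wpow_double {α : Type*} (w : List α) (n : ℕ) :
    wpow (w ++ w) n = wpow w (2 * n) := by
  induction n with
  | zero => rfl
  | succ n ih =>
    have h2 : 2 * (n + 1) = 2 + 2 * n := by ring
    rw [wpow_succ, ih, h2, wpow_add, wpow_two]

lemma wpow_getElem? {α : Type*} (w : List α) (n i : ℕ) (h : i < n * w.length) :
    (wpow w n)[i]? = w[i % w.length]? := by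
  induction n generalizing i with
  | zero => simp at h
  | succ n ih =>
    rw [wpow_succ]
    by_cases hi : i < w.length
    · rw [List.getElem?_append_left hi, Nat.mod_eq_of_lt hi]
    · push_neg at hi
      rw [Nat.succ_mul] at h
      rw [List.getElem?_append_right hi, ih (i - w.length) (by omega),
        Nat.mod_eq_sub_mod hi]

/-- With `r = pq`, `s = pp`, `n = |r|`, `u = r s^{n-1}`, `v = sⁿ`,
the word `uv = r s^{2n-1}` is primitive. -/
theorem rs_pow_primitive {A : Type*} (p q : List A) (hne : p ≠ q)
    (hlen : p.length = q.length) (hpos : 0 < p.length) :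
    Primitive (((p ++ q) ++ wpow (p ++ p) ((p ++ q).length - 1)) ++
      wpow (p ++ p) (p ++ q).length) := by
  set m := p.length with hm
  have hmm : m ≤ m * m := Nat.le_mul_of_pos_left m hpos
  have hn : (p ++ q).length = 2 * m := by
    simp only [List.length_append, ← hlen]; omega
  constructor
  · intro h
    have := congrArg List.length h
    simp only [List.length_append, List.length_nil] at this
    omega
  · intro t k hk heq
    set W : List A := p ++ (q ++ wpow p (8 * m - 2)) with hWdef
    have hWeq : ((p ++ q) ++ wpow (p ++ p) ((p ++ q).length - 1)) ++
        wpow (p ++ p) (p ++ q).length = W := by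
      rw [hn, List.append_assoc, ← wpow_add, wpow_double, List.append_assoc,
        show 2 * (2 * m - 1 + 2 * m) = 8 * m - 2 by omega]
    rw [hWeq] at heq
    set L := t.length with hL
    have hprod : (8 * m - 2) * m = 8 * (m * m) - 2 * m := by
      rw [Nat.sub_mul]; ring_nf
    have hWlen : W.length = 8 * (m * m) := by
      rw [hWdef]
      simp only [List.length_append, wpow_length, ← hm, ← hlen, hprod]
      omega
    have hkL : 8 * (m * m) = k * L := by rw [← hWlen, heq, wpow_length, hL]
    have hL1 : 1 ≤ L := by
      rcases Nat.eq_zero_or_pos L with h0 | h0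
      · rw [h0, Nat.mul_zero] at hkL; omega
      · exact h0
    have hLb : L ≤ 4 * (m * m) := by
      have h2 : 2 * L ≤ k * L := Nat.mul_le_mul_right L hk
      omega
    have hW : ∀ i, i < 8 * (m * m) → W[i]? = t[i % L]? := by
      intro i hi
      rw [heq, wpow_getElem? t k i (by rw [← hL]; omega), hL]
    have Wmid : ∀ x, x < m → W[m + x]? = q[x]? := by
      intro x hx
      rw [hWdef, List.getElem?_append_right (by omega : p.length ≤ m + x),
        show m + x - p.length = x by omega,
        List.getElem?_append_left (by omega : x < q.length)]
    have Wsuf : ∀ d, d < 8 * (m * m) - 2 * m → W[2 * m + d]? = p[d % m]? := by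
      intro d hd
      rw [hWdef, List.getElem?_append_right (by omega : p.length ≤ 2 * m + d),
        show 2 * m + d - p.length = m + d by omega,
        List.getElem?_append_right (by omega : q.length ≤ m + d),
        show m + d - q.length = d by omega,
        wpow_getElem? p _ d (by rw [← hm, hprod]; omega), ← hm]
    have rot1 : ∀ x, x < m → p[x]? = p[(x + L) % m]? := by
      intro x hx
      have b1 : 2 * m + x < 8 * (m * m) := by omega
      have b2 : 2 * m + (x + L) < 8 * (m * m) := by omega
      have e1 : W[2 * m + x]? = p[x]? := by
        rw [Wsuf x (by omega), Nat.mod_eq_of_lt hx]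
      have e2 : W[2 * m + (x + L)]? = p[(x + L) % m]? := Wsuf (x + L) (by omega)
      have e3 : (2 * m + (x + L)) % L = (2 * m + x) % L := by
        rw [← Nat.add_assoc, Nat.add_mod_right]
      rw [← e1, ← e2, hW _ b1, hW _ b2, e3]
    have rott : ∀ c, ∀ x, x < m → p[x]? = p[(x + L * c) % m]? := by
      intro c
      induction c with
      | zero => intro x hx; rw [Nat.mul_zero, Nat.add_zero, Nat.mod_eq_of_lt hx]
      | succ c ih =>
        intro x hx
        have hy : (x + L * c) % m < m := Nat.mod_lt _ (by omega)
        have e : ((x + L * c) % m + L) % m = (x + L * (c + 1)) % m := by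
          rw [Nat.mod_add_mod, Nat.mul_succ, Nat.add_assoc]
        rw [ih x hx, rot1 _ hy, e]
    have hfin : ∀ i, i < m → q[i]? = p[i]? := by
      intro i hi
      set c := m / L + 1 with hc
      have e1 := Nat.div_add_mod m L
      have e2 : m % L < L := Nat.mod_lt m (by omega)
      have hLc : L * c = L * (m / L) + L := by rw [hc, Nat.mul_add, Nat.mul_one]
      have hc1 : m ≤ L * c := by omega
      have hc2 : L * c ≤ m + L := by omega
      have b1 : m + i < 8 * (m * m) := by omega
      have b2 : m + i + L * c < 8 * (m * m) := by omega
      have e4 : W[m + i + L * c]? = p[(i + L * c - m) % m]? := by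
        rw [show m + i + L * c = 2 * m + (i + L * c - m) by omega]
        exact Wsuf _ (by omega)
      have s5 : (i + L * c) % m = (i + L * c - m) % m := by
        obtain ⟨D, hD⟩ : ∃ D, i + L * c = D + m := ⟨i + L * c - m, by omega⟩
        rw [hD, Nat.add_mod_right, show D + m - m = D by omega]
      calc q[i]? = W[m + i]? := (Wmid i hi).symm
        _ = t[(m + i) % L]? := hW _ b1
        _ = t[(m + i + L * c) % L]? := by rw [Nat.add_mul_mod_self_left]
        _ = W[m + i + L * c]? := (hW _ b2).symm
        _ = p[(i + L * c - m) % m]? := e4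
        _ = p[(i + L * c) % m]? := by rw [s5]
        _ = p[i]? := (rott c i hi).symm
    have hqp : q = p := by
      apply List.ext_getElem?
      intro i
      by_cases hi : i < m
      · exact hfin i hi
      · rw [List.getElem?_eq_none (by omega : q.length ≤ i),
          List.getElem?_eq_none (by omega : p.length ≤ i)]
    exact hne hqp.symm
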